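/- Let G = (V, E) be a finite connected weighted graph with nonnegative edge weights w, let T ⊆ V with |T| ≥ 2, and let s, d ∈ T. Let OPT denote the minimum total weight of a walk in G from s to d that visits every vertex of T at least once, and let M denote the minimum total weight of a spanning tree of the metric completion of T. Then M ≤ OPT, and there exists a walk in G from s to d visiting every vertex of T whose total weight is at most 2 · M; consequently there exists such a walk of total weight at most 2 · OPT. -/

import Mathlib

/-!
Lower bound: given a walk from `s` to `d` through all terminals, join each terminal to the
terminal visited before it. Each such edge of the metric completion weighs at most the part of
the walk in between, and the resulting graph is connected, so it contains a spanning tree and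
`M ≤ OPT`.

Upper bound: in the minimum spanning tree there is a walk from `s` to `d` through every terminal
that traverses each tree edge at most twice: start from the tree path and splice in
back-and-forth detours to unvisited vertices. Replacing each of its edges by a shortest walk in
`G` gives a walk of weight at most `2 M`.
-/

open SimpleGraph

/-- A spanning tree of `G` is a subgraph of `G` (on the same vertex set) that is a tree. -/
def IsSpanningTree {V : Type*} (G H : SimpleGraph V) : Prop :=
  H ≤ G ∧ H.IsTree

/-- The total weight of (the edges of) a graph `H` with edge-weight function `w`. -/
noncomputable def treeWeight {V : Type*} [Finite V] (H : SimpleGraph V)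
    (w : Sym2 V → ℝ) : ℝ :=
  ∑ e ∈ (Set.toFinite H.edgeSet).toFinset, w e

/-- `H` is a minimum spanning tree of the weighted graph `(G, w)`. -/
def IsMST {V : Type*} [Finite V] (G : SimpleGraph V) (w : Sym2 V → ℝ)
    (H : SimpleGraph V) : Prop :=
  IsSpanningTree G H ∧ ∀ H', IsSpanningTree G H' → treeWeight H w ≤ treeWeight H' w

/-- Weighted graph distance: the minimum (infimum) total weight of a walk from `u` to
`v` in `G`. -/
noncomputable def wdist {V : Type*} (G : SimpleGraph V) (w : Sym2 V → ℝ) (u v : V) : ℝ :=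
  sInf {x | ∃ p : G.Walk u v, x = (p.edges.map w).sum}

section WeightedDistance

variable {V : Type*} {G : SimpleGraph V} {w : Sym2 V → ℝ}

lemma sum_map_edges_nonneg (hw : ∀ e, 0 ≤ w e) {u v : V} (p : G.Walk u v) :
    0 ≤ (p.edges.map w).sum :=
  List.sum_nonneg (by simpa using fun e _ => hw e)

lemma wdist_nonneg (hw : ∀ e, 0 ≤ w e) (u v : V) : 0 ≤ wdist G w u v :=
  Real.sInf_nonneg (by rintro x ⟨p, rfl⟩; exact sum_map_edges_nonneg hw p)

lemma wdist_le_sum_map_edges (hw : ∀ e, 0 ≤ w e) {u v : V} (p : G.Walk u v) :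
    wdist G w u v ≤ (p.edges.map w).sum :=
  csInf_le ⟨0, by rintro x ⟨q, rfl⟩; exact sum_map_edges_nonneg hw q⟩ ⟨p, rfl⟩

lemma wdist_self (hw : ∀ e, 0 ≤ w e) (u : V) : wdist G w u u = 0 :=
  le_antisymm (by simpa using wdist_le_sum_map_edges hw (Walk.nil : G.Walk u u))
    (wdist_nonneg hw u u)

lemma wdist_le_of_adj (hw : ∀ e, 0 ≤ w e) {u v : V} (h : G.Adj u v) :
    wdist G w u v ≤ w s(u, v) := by
  simpa using wdist_le_sum_map_edges hw h.toWalk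

/-- Minimal walks can be sought among paths, of which there are finitely many. -/
lemma SimpleGraph.Reachable.exists_walk_sum_eq_wdist [Finite V] (hw : ∀ e, 0 ≤ w e) {u v : V}
    (h : G.Reachable u v) : ∃ p : G.Walk u v, (p.edges.map w).sum = wdist G w u v := by
  classical
  have := Fintype.ofFinite V
  obtain ⟨p, -, hp⟩ := Finset.exists_min_image Finset.univ
    (fun p : G.Path u v => ((p : G.Walk u v).edges.map w).sum) ⟨h.some.toPath, Finset.mem_univ _⟩
  refine ⟨p, le_antisymm (le_csInf ⟨_, h.some, rfl⟩ ?_) (wdist_le_sum_map_edges hw _)⟩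
  rintro x ⟨q, rfl⟩
  exact (hp q.toPath (Finset.mem_univ _)).trans <|
    (q.edges_bypass_sublist_edges.map w).sum_le_sum (by simpa using fun e _ => hw e)

lemma wdist_le_wdist_add_of_adj [Finite V] (hw : ∀ e, 0 ≤ w e) {t u v : V}
    (htu : G.Reachable t u) (huv : G.Adj u v) :
    wdist G w t v ≤ wdist G w t u + w s(u, v) := by
  obtain ⟨p, hp⟩ := htu.exists_walk_sum_eq_wdist hw
  simpa [hp] using wdist_le_sum_map_edges hw (p.concat huv)

end WeightedDistance

lemma reachable_edge {α : Type*} (a b : α) : (edge a b).Reachable a b := by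
  by_cases h : a = b
  · exact h ▸ Reachable.refl a
  · exact Adj.reachable ((edge_adj a b a b).2 ⟨Or.inl ⟨rfl, rfl⟩, h⟩)

section TreeWeight

variable {β : Type*} [Finite β] {f : Sym2 β → ℝ}

lemma treeWeight_le_sum_of_edgeSet_subset (hf : ∀ e, 0 ≤ f e) {H : SimpleGraph β}
    {S : Finset (Sym2 β)} (h : H.edgeSet ⊆ S) : treeWeight H f ≤ ∑ e ∈ S, f e :=
  Finset.sum_le_sum_of_subset_of_nonneg (by simpa using h) fun e _ _ => hf e

lemma treeWeight_mono (hf : ∀ e, 0 ≤ f e) {H₁ H₂ : SimpleGraph β} (h : H₁ ≤ H₂) :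
    treeWeight H₁ f ≤ treeWeight H₂ f :=
  treeWeight_le_sum_of_edgeSet_subset hf (by simpa using edgeSet_mono h)

lemma treeWeight_edge_le (hf : ∀ e, 0 ≤ f e) (a b : β) : treeWeight (edge a b) f ≤ f s(a, b) := by
  classical
  simpa using treeWeight_le_sum_of_edgeSet_subset hf (S := {s(a, b)}) (by simp)

lemma treeWeight_sup_le (hf : ∀ e, 0 ≤ f e) (H₁ H₂ : SimpleGraph β) :
    treeWeight (H₁ ⊔ H₂) f ≤ treeWeight H₁ f + treeWeight H₂ f := by
  classical
  set S₁ := (Set.toFinite H₁.edgeSet).toFinset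
  set S₂ := (Set.toFinite H₂.edgeSet).toFinset
  calc treeWeight (H₁ ⊔ H₂) f ≤ ∑ e ∈ S₁ ∪ S₂, f e :=
        treeWeight_le_sum_of_edgeSet_subset hf (by simp [S₁, S₂])
    _ ≤ ∑ e ∈ S₁ ∪ S₂, f e + ∑ e ∈ S₁ ∩ S₂, f e :=
        le_add_of_nonneg_right (Finset.sum_nonneg fun e _ => hf e)
    _ = treeWeight H₁ f + treeWeight H₂ f := Finset.sum_union_inter

lemma sum_map_edges_le_two_mul_treeWeight [DecidableEq β] (hf : ∀ e, 0 ≤ f e)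
    {H : SimpleGraph β} {u v : β} (p : H.Walk u v) (hp : ∀ e, p.edges.count e ≤ 2) :
    (p.edges.map f).sum ≤ 2 * treeWeight H f := by
  rw [Finset.sum_list_map_count, treeWeight, Finset.mul_sum]
  calc ∑ e ∈ p.edges.toFinset, p.edges.count e • f e
      ≤ ∑ e ∈ p.edges.toFinset, 2 * f e := by
        gcongr with e
        rw [nsmul_eq_mul]
        exact mul_le_mul_of_nonneg_right (by exact_mod_cast hp e) (hf e)
    _ ≤ ∑ e ∈ (Set.toFinite H.edgeSet).toFinset, 2 * f e :=
        Finset.sum_le_sum_of_subset_of_nonneg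
          (fun e he => by simpa using p.edges_subset_edgeSet (List.mem_toFinset.1 he))
          fun e _ _ => mul_nonneg zero_le_two (hf e)

end TreeWeight

namespace SimpleGraph.Walk

variable {α : Type*} [DecidableEq α] {K : SimpleGraph α}

/-- Splice the detour `u → y → u` into `p` at its first visit of `u`. -/
lemma exists_detour {s d u y : α} (p : K.Walk s d) (hu : u ∈ p.support) (huy : K.Adj u y) :
    ∃ p' : K.Walk s d, p'.support.Perm (y :: u :: p.support) ∧
      p'.edges.Perm (s(u, y) :: s(u, y) :: p.edges) := by
  refine ⟨(p.takeUntil u hu).append (cons huy (cons huy.symm (p.dropUntil u hu))), ?_, ?_⟩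
  · conv_rhs => rw [← p.take_spec hu]
    rw [support_append, support_append, support_cons, support_cons, List.tail_cons,
      ← cons_tail_support (p.dropUntil u hu)]
    exact List.perm_middle.trans (List.Perm.cons _ List.perm_middle)
  · conv_rhs => rw [← p.take_spec hu]
    rw [edges_append, edges_append, edges_cons, edges_cons, Sym2.eq_swap]
    exact List.perm_middle.trans (List.Perm.cons _ List.perm_middle)

/-- The detour to a vertex `y` outside `p` doubles the edge `s(u, y)`, which `p` cannot contain,
and visits strictly more vertices. -/
lemma exists_covering_of_count_edges_le_two [Finite α] (hK : K.Connected) {s d : α}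
    (p : K.Walk s d) (hp : ∀ e, p.edges.count e ≤ 2) :
    ∃ p' : K.Walk s d, (∀ v, v ∈ p'.support) ∧ ∀ e, p'.edges.count e ≤ 2 := by
  by_cases hall : ∀ v, v ∈ p.support
  · exact ⟨p, hall, hp⟩
  obtain ⟨x, hx⟩ := not_forall.1 hall
  obtain ⟨⟨⟨u, y⟩, huy⟩, -, hu, hy⟩ := (hK.preconnected s x).some.exists_boundary_dart
    {v | v ∈ p.support} p.start_mem_support hx
  obtain ⟨p', hsupp, hedges⟩ := p.exists_detour hu huy
  have hp' : ∀ e, p'.edges.count e ≤ 2 := by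
    intro e
    have hnew : s(u, y) ∉ p.edges := fun h => hy (p.snd_mem_support_of_mem_edges h)
    rw [hedges.count_eq]
    by_cases he : e = s(u, y)
    · subst he
      simp [List.count_eq_zero_of_not_mem hnew]
    · simpa [List.count_cons, Ne.symm he] using hp e
  have hfewer : {v | v ∉ p'.support}.ncard < {v | v ∉ p.support}.ncard := by
    refine Set.ncard_lt_ncard ⟨fun v hv hvp => hv (hsupp.mem_iff.2 ?_), fun h => h hy ?_⟩
      (Set.toFinite _)
    · exact List.mem_cons_of_mem _ (List.mem_cons_of_mem _ hvp)
    · exact hsupp.mem_iff.2 List.mem_cons_self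
  exact exists_covering_of_count_edges_le_two hK p' hp'
termination_by {v | v ∉ p.support}.ncard

end SimpleGraph.Walk

lemma SimpleGraph.Connected.exists_covering_walk_count_edges_le_two {α : Type*} [Finite α]
    [DecidableEq α] {K : SimpleGraph α} (hK : K.Connected) (s d : α) :
    ∃ p : K.Walk s d, (∀ v, v ∈ p.support) ∧ ∀ e, p.edges.count e ≤ 2 :=
  let p := (hK.preconnected s d).some.toPath
  p.1.exists_covering_of_count_edges_le_two hK fun e =>
    (List.nodup_iff_count_le_one.1 p.2.isTrail.edges_nodup e).trans one_le_two

section MetricCompletion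

variable {V : Type*} {G : SimpleGraph V} {w : Sym2 V → ℝ} {T : Set V}
  {wN : Sym2 T → ℝ}

lemma completion_weight_nonneg (hw : ∀ e, 0 ≤ w e)
    (hwN : ∀ a b : T, wN s(a, b) = wdist G w a b) (e : Sym2 T) : 0 ≤ wN e := by
  induction e using Sym2.ind with
  | _ a b => exact hwN a b ▸ wdist_nonneg hw a b

lemma exists_walk_le_of_completion_walk [Finite V] (hw : ∀ e, 0 ≤ w e) (hG : G.Connected)
    (hwN : ∀ a b : T, wN s(a, b) = wdist G w a b) {H : SimpleGraph T} {a b : T}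
    (p : H.Walk a b) : ∃ q : G.Walk a b,
      (q.edges.map w).sum ≤ (p.edges.map wN).sum ∧ ∀ t ∈ p.support, (t : V) ∈ q.support := by
  induction p with
  | nil => exact ⟨Walk.nil, by simp, by simp⟩
  | @cons a c b hac p ih =>
    obtain ⟨q, hq, hqp⟩ := ih
    obtain ⟨r, hr⟩ := (hG.preconnected a c).exists_walk_sum_eq_wdist hw
    refine ⟨r.append q, ?_, ?_⟩
    · simp only [Walk.edges_append, Walk.edges_cons, List.map_append, List.map_cons,
        List.sum_append, List.sum_cons, hr, hwN]
      linarith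
    · simp only [Walk.support_cons, List.mem_cons, forall_eq_or_imp, Walk.mem_support_append_iff]
      exact ⟨Or.inl r.start_mem_support, fun t ht => Or.inr (hqp t ht)⟩

lemma exists_covering_walk_le_two_mul_treeWeight [Finite V] (hw : ∀ e, 0 ≤ w e)
    (hG : G.Connected) (hwN : ∀ a b : T, wN s(a, b) = wdist G w a b) {H : SimpleGraph T}
    (hH : H.Connected) {s d : V} (hs : s ∈ T) (hd : d ∈ T) : ∃ p : G.Walk s d,
      (∀ t ∈ T, t ∈ p.support) ∧ (p.edges.map w).sum ≤ 2 * treeWeight H wN := by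
  classical
  obtain ⟨p, hpT, hp⟩ := hH.exists_covering_walk_count_edges_le_two ⟨s, hs⟩ ⟨d, hd⟩
  obtain ⟨q, hq, hqp⟩ := exists_walk_le_of_completion_walk hw hG hwN p
  exact ⟨q, fun t ht => hqp ⟨t, ht⟩ (hpT _),
    hq.trans (sum_map_edges_le_two_mul_treeWeight (completion_weight_nonneg hw hwN) p hp)⟩

/-- Induction along `q`, where `t₀` is the last terminal visited before `q` starts: every
terminal met by `q` is joined to the previous one. -/
lemma exists_completion_subgraph_le_walk [Finite V] (hw : ∀ e, 0 ≤ w e) (hG : G.Connected)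
    (hwN : ∀ a b : T, wN s(a, b) = wdist G w a b) {x v : V} (q : G.Walk x v) (t₀ : T) :
    ∃ K : SimpleGraph T, treeWeight K wN ≤ wdist G w t₀ x + (q.edges.map w).sum ∧
      ∀ t : T, (t : V) ∈ q.support → K.Reachable t₀ t := by
  have hwN₀ := completion_weight_nonneg hw hwN
  induction q generalizing t₀ with
  | @nil x =>
    by_cases hx : x ∈ T
    · refine ⟨edge t₀ ⟨x, hx⟩, by simpa [hwN] using treeWeight_edge_le hwN₀ t₀ ⟨x, hx⟩, ?_⟩
      intro t ht
      obtain rfl : t = ⟨x, hx⟩ := Subtype.ext (by simpa using ht)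
      exact reachable_edge _ _
    · refine ⟨⊥, by simp [treeWeight, wdist_nonneg hw], fun t ht => ?_⟩
      exact absurd (by simpa using ht : (t : V) = x) (fun h => hx (h ▸ t.2))
  | @cons x y v hxy q ih =>
    simp only [Walk.edges_cons, List.map_cons, List.sum_cons, Walk.support_cons, List.mem_cons]
    by_cases hx : x ∈ T
    · obtain ⟨K, hK, hreach⟩ := ih ⟨x, hx⟩
      refine ⟨edge t₀ ⟨x, hx⟩ ⊔ K, ?_, ?_⟩
      · have hedge := treeWeight_edge_le hwN₀ t₀ ⟨x, hx⟩
        rw [hwN] at hedge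
        linarith [treeWeight_sup_le hwN₀ (edge t₀ ⟨x, hx⟩) K, wdist_le_of_adj hw hxy]
      · have hx₀ : (edge t₀ ⟨x, hx⟩ ⊔ K).Reachable t₀ ⟨x, hx⟩ :=
          (reachable_edge _ _).mono le_sup_left
        rintro t (ht | ht)
        · obtain rfl : t = ⟨x, hx⟩ := Subtype.ext ht
          exact hx₀
        · exact hx₀.trans ((hreach t ht).mono le_sup_right)
    · obtain ⟨K, hK, hreach⟩ := ih t₀
      refine ⟨K, ?_, ?_⟩
      · linarith [wdist_le_wdist_add_of_adj hw (hG.preconnected t₀ x) hxy]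
      · rintro t (ht | ht)
        · exact absurd (ht ▸ t.2) hx
        · exact hreach t ht

lemma treeWeight_le_of_covering_walk [Finite V] (hw : ∀ e, 0 ≤ w e) (hG : G.Connected)
    (hwN : ∀ a b : T, wN s(a, b) = wdist G w a b) {H : SimpleGraph T} (hH : IsMST ⊤ wN H)
    {s d : V} (hs : s ∈ T) (q : G.Walk s d) (hq : ∀ t ∈ T, t ∈ q.support) :
    treeWeight H wN ≤ (q.edges.map w).sum := by
  obtain ⟨K, hK, hreach⟩ := exists_completion_subgraph_le_walk hw hG hwN q ⟨s, hs⟩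
  obtain ⟨F, hFK, hF⟩ := ((connected_iff_exists_forall_reachable K).2
    ⟨⟨s, hs⟩, fun t => hreach t (hq t t.2)⟩).exists_isTree_le
  calc treeWeight H wN ≤ treeWeight F wN := hH.2 F ⟨le_top, hF⟩
    _ ≤ treeWeight K wN := treeWeight_mono (completion_weight_nonneg hw hwN) hFK
    _ ≤ (q.edges.map w).sum := by simpa [wdist_self hw] using hK

end MetricCompletion

theorem mgpf_two_approximation_general {V : Type*} [Fintype V]
    (G : SimpleGraph V) (w : Sym2 V → ℝ)
    (hG : G.Connected) (hw : ∀ e, 0 ≤ w e)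
    (T : Set V)
    (s d : V) (hs : s ∈ T) (hd : d ∈ T)
    (wN : Sym2 ↥T → ℝ) (hwN : ∀ a b : ↥T, wN s(a, b) = wdist G w ↑a ↑b)
    (H : SimpleGraph ↥T) (hH : IsMST (⊤ : SimpleGraph ↥T) wN H) :
    treeWeight H wN ≤
      sInf {x | ∃ q : G.Walk s d, (∀ t ∈ T, t ∈ q.support) ∧ x = (q.edges.map w).sum} ∧
    (∃ p : G.Walk s d, (∀ t ∈ T, t ∈ p.support) ∧
      (p.edges.map w).sum ≤ 2 * treeWeight H wN) ∧
    (∃ p : G.Walk s d, (∀ t ∈ T, t ∈ p.support) ∧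
      (p.edges.map w).sum ≤
        2 * sInf {x | ∃ q : G.Walk s d, (∀ t ∈ T, t ∈ q.support) ∧
              x = (q.edges.map w).sum}) := by
  obtain ⟨p, hpT, hp⟩ :=
    exists_covering_walk_le_two_mul_treeWeight hw hG hwN hH.1.2.connected hs hd
  have hlower : treeWeight H wN ≤
      sInf {x | ∃ q : G.Walk s d, (∀ t ∈ T, t ∈ q.support) ∧ x = (q.edges.map w).sum} :=
    le_csInf ⟨_, p, hpT, rfl⟩ fun _ ⟨q, hq, hx⟩ =>
      hx ▸ treeWeight_le_of_covering_walk hw hG hwN hH hs q hq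
  exact ⟨hlower, ⟨p, hpT, hp⟩, p, hpT, by linarith⟩

/-- 2-approximation guarantee for Multi-Goal Path Finding.  Let `G` be a finite
connected graph with nonnegative weights, `T` a set of terminals with `|T| ≥ 2` and
`s, d ∈ T`, let `OPT` be the minimum total weight of a walk from `s` to `d` visiting
every vertex of `T`, and let `H` be a minimum spanning tree of the metric completion of
`T` (so `treeWeight H wN = M`).  Then `M ≤ OPT`, some walk from `s` to `d` visiting all
of `T` has total weight at most `2 * M`, and consequently some such walk has total
weight at most `2 * OPT`. -/
theorem mgpf_two_approximation {V : Type*} [Fintype V]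
    (G : SimpleGraph V) (w : Sym2 V → ℝ)
    (hG : G.Connected) (hw : ∀ e, 0 ≤ w e)
    (T : Set V) (hT : 2 ≤ T.ncard)
    (s d : V) (hs : s ∈ T) (hd : d ∈ T)
    (wN : Sym2 ↥T → ℝ) (hwN : ∀ a b : ↥T, wN s(a, b) = wdist G w ↑a ↑b)
    (H : SimpleGraph ↥T) (hH : IsMST (⊤ : SimpleGraph ↥T) wN H) :
    treeWeight H wN ≤
      sInf {x | ∃ q : G.Walk s d, (∀ t ∈ T, t ∈ q.support) ∧ x = (q.edges.map w).sum} ∧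
    (∃ p : G.Walk s d, (∀ t ∈ T, t ∈ p.support) ∧
      (p.edges.map w).sum ≤ 2 * treeWeight H wN) ∧
    (∃ p : G.Walk s d, (∀ t ∈ T, t ∈ p.support) ∧
      (p.edges.map w).sum ≤
        2 * sInf {x | ∃ q : G.Walk s d, (∀ t ∈ T, t ∈ q.support) ∧
              x = (q.edges.map w).sum}) :=
  mgpf_two_approximation_general G w hG hw T s d hs hd wN hwN H hH
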